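/- Let X and Y be finite types and let p be a strictly positive probability mass function on (X×Y)^{k+2} satisfying the bipartite Markov property. If p(x_k | y_0,…,y_k) = p(x_k | y_k) for all arguments (y_k is a sufficient statistic of x_k), then the marginal dynamics of Y alone is Markovian at step k: p(y_{k+1} | y_0,…,y_k) = p(y_{k+1} | y_k) for all arguments. (Equation (24).) -/
import Mathlib


open Finset

/-- Marginal (pushforward) of a pmf `p` on `Ω` along an observable `f`. -/
def margin {Ω α : Type*} [Fintype Ω] [DecidableEq α] (p : Ω → ℝ) (f : Ω → α) (a : α) : ℝ :=
  ∑ ω : Ω, if f ω = a then p ω else 0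

/-- Conditional probability `p(a | b)` of observable `f` given observable `g`. -/
noncomputable def condProb {Ω α β : Type*} [Fintype Ω] [DecidableEq α] [DecidableEq β]
    (p : Ω → ℝ) (f : Ω → α) (g : Ω → β) (a : α) (b : β) : ℝ :=
  margin p (fun ω => (f ω, g ω)) (a, b) / margin p g b

/-- Mutual information `I(f : g)` of observables `f` and `g`. -/
noncomputable def mutualInfo {Ω α β : Type*} [Fintype Ω] [Fintype α] [Fintype β]
    [DecidableEq α] [DecidableEq β] (p : Ω → ℝ) (f : Ω → α) (g : Ω → β) : ℝ :=
  ∑ a : α, ∑ b : β,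
    margin p (fun ω => (f ω, g ω)) (a, b) *
      Real.log (margin p (fun ω => (f ω, g ω)) (a, b) / (margin p f a * margin p g b))

/-- Conditional mutual information `I(f : g | h)` of observables `f`, `g` given `h`. -/
noncomputable def condMI {Ω α β γ : Type*} [Fintype Ω] [Fintype α] [Fintype β] [Fintype γ]
    [DecidableEq α] [DecidableEq β] [DecidableEq γ]
    (p : Ω → ℝ) (f : Ω → α) (g : Ω → β) (h : Ω → γ) : ℝ :=
  ∑ a : α, ∑ b : β, ∑ c : γ,
    margin p (fun ω => (f ω, g ω, h ω)) (a, b, c) *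
      Real.log ((margin p (fun ω => (f ω, g ω, h ω)) (a, b, c) / margin p h c) /
        ((margin p (fun ω => (f ω, h ω)) (a, c) / margin p h c) *
          (margin p (fun ω => (g ω, h ω)) (b, c) / margin p h c)))

/-- The bipartite Markov property for a pmf on trajectories `(x_0,y_0),…,(x_{k+1},y_{k+1})`:
for every `0 ≤ j ≤ k`,
`p(x_{j+1}, y_{j+1} | x_0,…,x_j, y_0,…,y_j) = p(x_{j+1} | x_j, y_j) · p(y_{j+1} | x_j, y_j)`. -/
def BipartiteMarkov {X Y : Type*} [Fintype X] [Fintype Y] [DecidableEq X] [DecidableEq Y]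
    (k : ℕ) (p : (Fin (k + 2) → X × Y) → ℝ) : Prop :=
  ∀ j : Fin (k + 1), ∀ h : Fin (j.1 + 1) → X × Y, ∀ x' : X, ∀ y' : Y,
    condProb p (fun t => t j.succ)
        (fun t (i : Fin (j.1 + 1)) => t (Fin.castLE (Nat.succ_le_succ j.isLt.le) i))
        (x', y') h =
      condProb p (fun t => (t j.succ).1) (fun t => t j.castSucc) x' (h (Fin.last j.1)) *
        condProb p (fun t => (t j.succ).2) (fun t => t j.castSucc) y' (h (Fin.last j.1))

section Aux
variable {Ω α β : Type*} [Fintype Ω] [DecidableEq α] [DecidableEq β]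

lemma margin_eq_of_iff (p : Ω → ℝ) (f : Ω → α) (g : Ω → β) (a : α) (b : β)
    (h : ∀ ω, f ω = a ↔ g ω = b) : margin p f a = margin p g b :=
  Finset.sum_congr rfl fun ω _ => by simp only [h ω]

lemma margin_pos (p : Ω → ℝ) (hp : ∀ ω, 0 < p ω) (g : Ω → β) (b : β)
    (h : ∃ ω, g ω = b) : 0 < margin p g b := by
  obtain ⟨ω0, h0⟩ := h
  unfold margin
  refine Finset.sum_pos' (fun ω _ => ?_) ⟨ω0, Finset.mem_univ _, ?_⟩
  · split
    · exact (hp ω).le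
    · exact le_rfl
  · simp only [h0, if_pos rfl]
    exact hp ω0

lemma sum_margin_pair {ι : Type*} [Fintype ι] [DecidableEq ι]
    (p : Ω → ℝ) (e : Ω → ι) (f : Ω → α) (a : α) :
    ∑ i : ι, margin p (fun ω => (e ω, f ω)) (i, a) = margin p f a := by
  unfold margin
  rw [Finset.sum_comm]
  refine Finset.sum_congr rfl fun ω _ => ?_
  by_cases hf : f ω = a
  · simp [Prod.ext_iff, hf, Finset.sum_ite_eq]
  · simp [Prod.ext_iff, hf]

lemma sum_margin_fiber [Fintype α] (p : Ω → ℝ) (f : Ω → α) (σ : α → β) (b : β) :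
    margin p (fun ω => σ (f ω)) b = ∑ a : α, if σ a = b then margin p f a else 0 := by
  have h1 : ∀ a : α, (if σ a = b then margin p f a else 0)
      = ∑ ω : Ω, if f ω = a then (if σ a = b then p ω else 0) else 0 := by
    intro a
    by_cases hs : σ a = b <;> simp [hs, margin]
  calc margin p (fun ω => σ (f ω)) b
      = ∑ ω : Ω, if σ (f ω) = b then p ω else 0 := rfl
    _ = ∑ ω : Ω, ∑ a : α, if f ω = a then (if σ a = b then p ω else 0) else 0 := by
        refine Finset.sum_congr rfl fun ω _ => ?_
        rw [Finset.sum_ite_eq Finset.univ (f ω) (fun a => if σ a = b then p ω else 0)]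
        simp
    _ = ∑ a : α, ∑ ω : Ω, if f ω = a then (if σ a = b then p ω else 0) else 0 :=
        Finset.sum_comm
    _ = ∑ a : α, if σ a = b then margin p f a else 0 :=
        Finset.sum_congr rfl fun a _ => (h1 a).symm

lemma condProb_mul_margin (p : Ω → ℝ) (f : Ω → α) (g : Ω → β) (a : α) (b : β)
    (hb : margin p g b ≠ 0) :
    condProb p f g a b * margin p g b = margin p (fun ω => (f ω, g ω)) (a, b) :=
  div_mul_cancel₀ _ hb

end Aux

section Defs
variable {X Y : Type*}

def tY (k : ℕ) : (Fin (k + 2) → X × Y) → Y := fun t => (t (Fin.last (k + 1))).2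
def tXY (k : ℕ) : (Fin (k + 2) → X × Y) → X × Y := fun t => t (Fin.last (k + 1))
def sXY (k : ℕ) : (Fin (k + 2) → X × Y) → X × Y := fun t => t (Fin.castSucc (Fin.last k))
def sX (k : ℕ) : (Fin (k + 2) → X × Y) → X := fun t => (t (Fin.castSucc (Fin.last k))).1
def sY (k : ℕ) : (Fin (k + 2) → X × Y) → Y := fun t => (t (Fin.castSucc (Fin.last k))).2
def hXY (k : ℕ) : (Fin (k + 2) → X × Y) → (Fin (k + 1) → X × Y) := fun t i => t i.castSucc
def hY (k : ℕ) : (Fin (k + 2) → X × Y) → (Fin (k + 1) → Y) := fun t i => (t i.castSucc).2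

end Defs



/-- Equation (24): if `y_k` is a sufficient statistic of `x_k`, i.e.
`p(x_k | y_0,…,y_k) = p(x_k | y_k)`, then the marginal dynamics of `Y` alone is Markovian at
step `k`: `p(y_{k+1} | y_0,…,y_k) = p(y_{k+1} | y_k)`. -/
theorem memory_marginal_markov {X Y : Type*} [Fintype X] [Fintype Y]
    [DecidableEq X] [DecidableEq Y] (k : ℕ)
    (p : (Fin (k + 2) → X × Y) → ℝ)
    (hpos : ∀ ω, 0 < p ω) (hnorm : ∑ ω, p ω = 1)
    (hbip : BipartiteMarkov k p)
    (hsuff : ∀ (x : X) (ys : Fin (k + 1) → Y),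
      condProb p (fun t => (t ⟨k, by omega⟩).1)
          (fun t (i : Fin (k + 1)) => (t i.castSucc).2) x ys =
        condProb p (fun t => (t ⟨k, by omega⟩).1)
          (fun t => (t ⟨k, by omega⟩).2) x (ys (Fin.last k))) :
    ∀ (y' : Y) (ys : Fin (k + 1) → Y),
      condProb p (fun t => (t (Fin.last (k + 1))).2)
          (fun t (i : Fin (k + 1)) => (t i.castSucc).2) y' ys =
        condProb p (fun t => (t (Fin.last (k + 1))).2)
          (fun t => (t ⟨k, by omega⟩).2) y' (ys (Fin.last k)) := by
  
  intro y' ys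
  show condProb p (tY k) (hY k) y' ys = condProb p (tY k) (sY k) y' (ys (Fin.last k))
  set c := ys (Fin.last k) with hc
  -- nonemptiness of the sample space
  have hΩ : Nonempty (Fin (k + 2) → X × Y) := by
    by_contra hne
    rw [not_nonempty_iff] at hne
    rw [Finset.univ_eq_empty, Finset.sum_empty] at hnorm
    exact one_ne_zero hnorm.symm
  obtain ⟨ω0⟩ := hΩ
  set z0 : X × Y := ω0 0 with hz0
  -- positivity of the relevant margins
  have DH : ∀ h : Fin (k + 1) → X × Y, 0 < margin p (hXY k) h := by
    intro h
    refine margin_pos p hpos _ _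
      ⟨fun i => if hlt : i.1 < k + 1 then h ⟨i.1, hlt⟩ else z0, ?_⟩
    funext i
    show (if hlt : (i.castSucc : Fin (k + 2)).1 < k + 1
        then h ⟨(i.castSucc : Fin (k + 2)).1, hlt⟩ else z0) = h i
    rw [dif_pos (show (i.castSucc : Fin (k + 2)).1 < k + 1 from i.isLt)]
    exact congrArg h (Fin.ext rfl)
  have DYH : ∀ v : Fin (k + 1) → Y, 0 < margin p (hY k) v := by
    intro v
    refine margin_pos p hpos _ _
      ⟨fun i => if hlt : i.1 < k + 1 then (z0.1, v ⟨i.1, hlt⟩) else z0, ?_⟩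
    funext i
    show ((if hlt : (i.castSucc : Fin (k + 2)).1 < k + 1
        then (z0.1, v ⟨(i.castSucc : Fin (k + 2)).1, hlt⟩) else z0) : X × Y).2 = v i
    rw [dif_pos (show (i.castSucc : Fin (k + 2)).1 < k + 1 from i.isLt)]
    exact congrArg v (Fin.ext rfl)
  have DT : ∀ z : X × Y, 0 < margin p (sXY k) z :=
    fun z => margin_pos p hpos _ _ ⟨fun _ => z, rfl⟩
  have DC : ∀ cc : Y, 0 < margin p (sY k) cc :=
    fun cc => margin_pos p hpos _ _ ⟨fun _ => (z0.1, cc), rfl⟩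
  -- key consequence of the bipartite Markov property at step k, summed over x'
  have key2 : ∀ (y0 : Y) (h : Fin (k + 1) → X × Y),
      margin p (fun ω => (tY k ω, hXY k ω)) (y0, h)
        = condProb p (tY k) (sXY k) y0 (h (Fin.last k)) * margin p (hXY k) h := by
    intro y0 h
    have hb : ∀ x' : X,
        condProb p (tXY k) (hXY k) (x', y0) h
          = condProb p (fun t => (tXY k t).1) (sXY k) x' (h (Fin.last k)) *
            condProb p (tY k) (sXY k) y0 (h (Fin.last k)) :=
      fun x' => hbip (Fin.last k) h x' y0
    have hXsum : ∑ x' : X,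
        condProb p (fun t => (tXY k t).1) (sXY k) x' (h (Fin.last k)) = 1 := by
      unfold condProb
      rw [← Finset.sum_div,
        sum_margin_pair p (fun t => (tXY k t).1) (sXY k) (h (Fin.last k))]
      exact div_self (DT _).ne'
    have hLsum : ∑ x' : X, condProb p (tXY k) (hXY k) (x', y0) h
        = margin p (fun ω => (tY k ω, hXY k ω)) (y0, h) / margin p (hXY k) h := by
      unfold condProb
      rw [← Finset.sum_div]
      congr 1
      calc ∑ x' : X, margin p (fun ω => (tXY k ω, hXY k ω)) ((x', y0), h)
          = ∑ x' : X, margin p (fun ω => ((tXY k ω).1, (tY k ω, hXY k ω)))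
              (x', (y0, h)) :=
            Finset.sum_congr rfl fun x' _ => margin_eq_of_iff p _ _ _ _ fun ω => by
              simp only [Prod.ext_iff, tY, tXY]
              tauto
        _ = margin p (fun ω => (tY k ω, hXY k ω)) (y0, h) :=
            sum_margin_pair p _ _ _
    have hmain : margin p (fun ω => (tY k ω, hXY k ω)) (y0, h) / margin p (hXY k) h
        = condProb p (tY k) (sXY k) y0 (h (Fin.last k)) := by
      rw [← hLsum]
      calc ∑ x' : X, condProb p (tXY k) (hXY k) (x', y0) h
          = ∑ x' : X, condProb p (fun t => (tXY k t).1) (sXY k) x' (h (Fin.last k)) *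
              condProb p (tY k) (sXY k) y0 (h (Fin.last k)) :=
            Finset.sum_congr rfl fun x' _ => hb x'
        _ = _ := by rw [← Finset.sum_mul, hXsum, one_mul]
    rw [div_eq_iff (DH h).ne'] at hmain
    exact hmain
  -- the main summation identity (*)
  have star : ∀ x : X,
      margin p (fun ω => (tY k ω, (sX k ω, hY k ω))) (y', (x, ys))
        = condProb p (tY k) (sXY k) y' (x, c) *
            margin p (fun ω => (sX k ω, hY k ω)) (x, ys) := by
    intro x
    have e1 : margin p (fun ω => (tY k ω, (sX k ω, hY k ω))) (y', (x, ys))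
        = ∑ q : Y × (Fin (k + 1) → X × Y),
            if ((q.1, ((q.2 (Fin.last k)).1, fun i => (q.2 i).2)) :
                Y × (X × (Fin (k + 1) → Y))) = (y', (x, ys))
            then margin p (fun ω => (tY k ω, hXY k ω)) q else 0 :=
      sum_margin_fiber p (fun ω => (tY k ω, hXY k ω))
        (fun q => (q.1, ((q.2 (Fin.last k)).1, fun i => (q.2 i).2))) (y', (x, ys))
    have e2 : margin p (fun ω => (sX k ω, hY k ω)) (x, ys)
        = ∑ h : Fin (k + 1) → X × Y,
            if (((h (Fin.last k)).1, fun i => (h i).2) : X × (Fin (k + 1) → Y)) = (x, ys)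
            then margin p (hXY k) h else 0 :=
      sum_margin_fiber p (hXY k)
        (fun h => ((h (Fin.last k)).1, fun i => (h i).2)) (x, ys)
    have inner : ∀ y0 : Y, (∑ h : Fin (k + 1) → X × Y,
        if ((y0, ((h (Fin.last k)).1, fun i => (h i).2)) :
            Y × (X × (Fin (k + 1) → Y))) = (y', (x, ys))
        then margin p (fun ω => (tY k ω, hXY k ω)) (y0, h) else 0)
        = if y0 = y' then (∑ h : Fin (k + 1) → X × Y,
            if (((h (Fin.last k)).1, fun i => (h i).2) : X × (Fin (k + 1) → Y)) = (x, ys)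
            then condProb p (tY k) (sXY k) y' (x, c) * margin p (hXY k) h else 0)
          else 0 := by
      intro y0
      by_cases hy : y0 = y'
      · subst hy
        rw [if_pos rfl]
        refine Finset.sum_congr rfl fun h _ => ?_
        by_cases hcond :
            (((h (Fin.last k)).1, fun i => (h i).2) : X × (Fin (k + 1) → Y)) = (x, ys)
        · rw [if_pos (by rw [hcond]), if_pos hcond, key2 y0 h]
          have h1 : (h (Fin.last k)).1 = x := (Prod.ext_iff.1 hcond).1
          have h2 : (h (Fin.last k)).2 = c := by
            rw [hc]
            exact congrFun ((Prod.ext_iff.1 hcond).2) (Fin.last k)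
          rw [show h (Fin.last k) = (x, c) from Prod.ext h1 h2]
        · rw [if_neg (fun hcontra => hcond (congrArg Prod.snd hcontra)), if_neg hcond]
      · rw [if_neg hy]
        refine Finset.sum_eq_zero fun h _ => ?_
        rw [if_neg (by simp only [Prod.mk.injEq]; tauto)]
    rw [e1, e2, Finset.mul_sum, Fintype.sum_prod_type]
    rw [Finset.sum_congr rfl fun y0 _ => inner y0]
    rw [Finset.sum_ite_eq' Finset.univ y']
    simp only [Finset.mem_univ, if_true]
    exact Finset.sum_congr rfl fun h _ => by rw [mul_ite, mul_zero]
  -- sufficiency restated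
  have hsuff' : ∀ x : X, condProb p (sX k) (hY k) x ys = condProb p (sX k) (sY k) x c :=
    fun x => hsuff x ys
  -- numerator of the LHS
  have hnumL : margin p (fun ω => (tY k ω, hY k ω)) (y', ys)
      = (∑ x : X, condProb p (tY k) (sXY k) y' (x, c) * condProb p (sX k) (sY k) x c)
          * margin p (hY k) ys := by
    calc margin p (fun ω => (tY k ω, hY k ω)) (y', ys)
        = ∑ x : X, margin p (fun ω => (sX k ω, (tY k ω, hY k ω))) (x, (y', ys)) :=
          (sum_margin_pair p (sX k) (fun ω => (tY k ω, hY k ω)) (y', ys)).symm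
      _ = ∑ x : X, margin p (fun ω => (tY k ω, (sX k ω, hY k ω))) (y', (x, ys)) :=
          Finset.sum_congr rfl fun x _ => margin_eq_of_iff p _ _ _ _ fun ω => by
            simp only [Prod.ext_iff]
            tauto
      _ = ∑ x : X, condProb p (tY k) (sXY k) y' (x, c) *
            margin p (fun ω => (sX k ω, hY k ω)) (x, ys) :=
          Finset.sum_congr rfl fun x _ => star x
      _ = ∑ x : X, condProb p (tY k) (sXY k) y' (x, c) *
            (condProb p (sX k) (sY k) x c * margin p (hY k) ys) := by
          refine Finset.sum_congr rfl fun x _ => ?_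
          rw [← hsuff' x, condProb_mul_margin p (sX k) (hY k) x ys (DYH ys).ne']
      _ = _ := by
          rw [Finset.sum_mul]
          exact Finset.sum_congr rfl fun x _ => (mul_assoc _ _ _).symm
  -- numerator of the RHS
  have hnumR : margin p (fun ω => (tY k ω, sY k ω)) (y', c)
      = (∑ x : X, condProb p (tY k) (sXY k) y' (x, c) * condProb p (sX k) (sY k) x c)
          * margin p (sY k) c := by
    calc margin p (fun ω => (tY k ω, sY k ω)) (y', c)
        = ∑ x : X, margin p (fun ω => (sX k ω, (tY k ω, sY k ω))) (x, (y', c)) :=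
          (sum_margin_pair p (sX k) (fun ω => (tY k ω, sY k ω)) (y', c)).symm
      _ = ∑ x : X, margin p (fun ω => (tY k ω, sXY k ω)) (y', (x, c)) :=
          Finset.sum_congr rfl fun x _ => margin_eq_of_iff p _ _ _ _ fun ω => by
            simp only [Prod.ext_iff, sX, sY, sXY]
            tauto
      _ = ∑ x : X, condProb p (tY k) (sXY k) y' (x, c) * margin p (sXY k) (x, c) :=
          Finset.sum_congr rfl fun x _ =>
            (condProb_mul_margin p _ _ _ _ (DT _).ne').symm
      _ = ∑ x : X, condProb p (tY k) (sXY k) y' (x, c) *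
            (condProb p (sX k) (sY k) x c * margin p (sY k) c) := by
          refine Finset.sum_congr rfl fun x _ => ?_
          congr 1
          rw [condProb_mul_margin p (sX k) (sY k) x c (DC c).ne']
          exact margin_eq_of_iff p _ _ _ _ fun ω => by
            simp only [Prod.ext_iff, sX, sY, sXY]
      _ = _ := by
          rw [Finset.sum_mul]
          exact Finset.sum_congr rfl fun x _ => (mul_assoc _ _ _).symm
  show condProb p (tY k) (hY k) y' ys = condProb p (tY k) (sY k) y' c
  unfold condProb
  rw [hnumL, hnumR, mul_div_assoc, mul_div_assoc, div_self (DYH ys).ne',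
    div_self (DC c).ne']
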